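/- Let w ∈ [k]^n be a word and u = std(conv(w)) its standardized convexification. Then in every pipe dream for u (a finite set P ⊆ ℤ₊×ℤ₊ of cross positions with associated permutation u), all crosses lie in the leftmost k columns, i.e., (i,j) ∈ P implies j ≤ k. -/

import Mathlib

/-! Pipe dreams and their (Demazure product) permutations, together with the
convexification/standardization combinatorics of words, all 0-indexed. -/

/-- Position `p` is an initial position of the word `w`. -/
def InitialPos {n k : ℕ} (w : Fin n → Fin k) (p : Fin n) : Prop :=
  ∀ q : Fin n, q < p → w q ≠ w p

/-- A word is convex if all copies of each letter occupy consecutive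
positions. -/
def IsConvexWord {n k : ℕ} (w : Fin n → Fin k) : Prop :=
  ∀ p q r : Fin n, p ≤ q → q ≤ r → w p = w r → w q = w p

/-- Two words have the same multiset of letters. -/
def SameLetters {n k : ℕ} (w v : Fin n → Fin k) : Prop :=
  ∀ a : Fin k, Set.ncard {p : Fin n | w p = a} = Set.ncard {p : Fin n | v p = a}

/-- The first occurrence position of the letter `a` in the word `w`. -/
noncomputable def firstOcc {n k : ℕ} (w : Fin n → Fin k) (a : Fin k) : ℕ :=
  sInf {p : ℕ | ∃ h : p < n, w ⟨p, h⟩ = a}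

/-- Two words have the same ordering of initial letters. -/
def SameInitialOrder {n k : ℕ} (w v : Fin n → Fin k) : Prop :=
  ∀ a b : Fin k, (∃ p, w p = a) → (∃ p, w p = b) →
    (firstOcc w a ≤ firstOcc w b ↔ firstOcc v a ≤ firstOcc v b)

/-- `v` is the convexification of `w`. -/
def IsConvexification {n k : ℕ} (w v : Fin n → Fin k) : Prop :=
  IsConvexWord v ∧ SameLetters w v ∧ SameInitialOrder w v

/-- `u ∈ S_{n+k−m}` is the standardization of the word `v ∈ [k]ⁿ` (using `m`
letters), 0-indexed. -/
def IsStandardization {n k m : ℕ} (v : Fin n → Fin k)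
    (u : Equiv.Perm (Fin (n + (k - m)))) : Prop :=
  ∀ p : Fin (n + (k - m)),
    (∀ h : (p : ℕ) < n,
      (InitialPos v ⟨p, h⟩ → (u p : ℕ) = (v ⟨p, h⟩ : ℕ)) ∧
      (¬ InitialPos v ⟨p, h⟩ →
        (u p : ℕ) = k + Set.ncard {q : Fin n | (q : ℕ) < (p : ℕ) ∧ ¬ InitialPos v q})) ∧
    (n ≤ (p : ℕ) →
      (u p : ℕ) < k ∧ (∀ q : Fin n, (v q : ℕ) ≠ (u p : ℕ)) ∧
      Set.ncard {c : Fin k | (c : ℕ) < (u p : ℕ) ∧ ∀ q : Fin n, v q ≠ c} = (p : ℕ) - n)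

/-- The number of inversions of a permutation of `ℕ` (finite for permutations
moving only finitely many points). -/
noncomputable def invCountNat (u : Equiv.Perm ℕ) : ℕ :=
  Set.ncard {x : ℕ × ℕ | x.1 < x.2 ∧ u x.2 < u x.1}

/-- The simple transposition `s_a` of `ℕ`, swapping `a` and `a + 1`
(0-indexed). -/
def sNat (a : ℕ) : Equiv.Perm ℕ := Equiv.swap a (a + 1)

/-- The Demazure product of a word in the simple transpositions: each letter is
multiplied on the right when it increases the length and dropped otherwise.
(Redundant crossings of a non-reduced pipe dream are thereby ignored.) -/
noncomputable def demazureProd (l : List ℕ) : Equiv.Perm ℕ :=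
  l.foldl (fun acc a =>
    if invCountNat (acc * sNat a) ≤ invCountNat acc then acc else acc * sNat a) 1

/-- The word of a pipe dream `P` (a finite set of crosses, in 0-indexed matrix
coordinates): the cross at `(i, j)` is the letter `s_{i+j}`, and the crosses
are read along rows from right to left, rows top to bottom. -/
def pdWord (P : Finset (ℕ × ℕ)) : List ℕ :=
  let N := (P.sup fun x => max x.1 x.2) + 1
  (List.range N).flatMap fun i =>
    (List.range N).reverse.filterMap fun j =>
      if (i, j) ∈ P then some (i + j) else none

/-! Let `(r, c)` be the first cross, in the reading order of the word of `P`, among the crosses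
in columns `≥ k`. Every letter read before it comes from a cross above it in a column `< k`, so
it is at most `r + c - 2` and the partial Demazure product fixes `[r + c, ∞)`. The letter
`s_{r+c}` therefore lengthens it and makes `r + c` a left descent, and Demazure steps never
destroy left descents, since they multiply by `s_b` only when `b` is not a right descent. But
standardization writes the values `≥ k` of `u` in increasing order, so `u` has no left descent
`≥ k`. -/

noncomputable def demazureStep (σ : Equiv.Perm ℕ) (a : ℕ) : Equiv.Perm ℕ :=
  if invCountNat (σ * sNat a) ≤ invCountNat σ then σ else σ * sNat a

lemma demazureProd_eq_foldl (l : List ℕ) : demazureProd l = l.foldl demazureStep 1 := rfl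

def inversionSet (σ : Equiv.Perm ℕ) : Set (ℕ × ℕ) := {x | x.1 < x.2 ∧ σ x.2 < σ x.1}

lemma invCountNat_eq_ncard (σ : Equiv.Perm ℕ) : invCountNat σ = (inversionSet σ).ncard := rfl

def FixesFrom (σ : Equiv.Perm ℕ) (M : ℕ) : Prop := ∀ x, M ≤ x → σ x = x

def IsLeftDescent (σ : Equiv.Perm ℕ) (a : ℕ) : Prop := σ⁻¹ (a + 1) < σ⁻¹ a

lemma sNat_apply_of_lt {b x : ℕ} (hx : x < b) : sNat b x = x :=
  Equiv.swap_apply_of_ne_of_ne (by omega) (by omega)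

lemma sNat_apply_of_add_two_le {b x : ℕ} (hx : b + 2 ≤ x) : sNat b x = x :=
  Equiv.swap_apply_of_ne_of_ne (by omega) (by omega)

lemma sNat_lt_sNat {b x y : ℕ} (hxy : x < y) (hne : ¬(x = b ∧ y = b + 1)) :
    sNat b x < sNat b y := by
  simp only [sNat, Equiv.swap_apply_def]
  split_ifs <;> omega

namespace FixesFrom

variable {σ : Equiv.Perm ℕ} {M : ℕ}

lemma mono {M' : ℕ} (h : FixesFrom σ M) (hM : M ≤ M') : FixesFrom σ M' :=
  fun x hx => h x (hM.trans hx)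

lemma apply_lt (h : FixesFrom σ M) {x : ℕ} (hx : x < M) : σ x < M := by
  by_contra! hc
  have := σ.injective (h _ hc)
  omega

lemma inv (h : FixesFrom σ M) : FixesFrom σ⁻¹ M :=
  fun x hx => Equiv.Perm.inv_eq_iff_eq.2 (h x hx).symm

lemma inversionSet_subset (h : FixesFrom σ M) :
    inversionSet σ ⊆ Set.Iio M ×ˢ Set.Iio M := by
  rintro ⟨p, q⟩ ⟨hpq, hinv⟩
  simp only [Set.mem_prod, Set.mem_Iio]
  rcases lt_or_ge q M with hq | hq
  · exact ⟨hpq.trans hq, hq⟩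
  rcases lt_or_ge p M with hp | hp
  · have := h.apply_lt hp
    simp only [h q hq] at hinv
    omega
  · simp only [h q hq, h p hp] at hinv
    omega

lemma inversionSet_finite (h : FixesFrom σ M) : (inversionSet σ).Finite :=
  ((Set.finite_Iio M).prod (Set.finite_Iio M)).subset h.inversionSet_subset

lemma mul_sNat (h : FixesFrom σ M) {b : ℕ} (hb : b + 2 ≤ M) : FixesFrom (σ * sNat b) M :=
  fun x hx => by rw [Equiv.Perm.mul_apply, sNat_apply_of_add_two_le (hb.trans hx), h x hx]

lemma demazureStep (h : FixesFrom σ M) {b : ℕ} (hb : b + 2 ≤ M) :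
    FixesFrom (demazureStep σ b) M := by
  unfold _root_.demazureStep
  split_ifs
  exacts [h, h.mul_sNat hb]

lemma foldl_demazureStep {L : List ℕ} (hL : ∀ b ∈ L, b + 2 ≤ M) (h : FixesFrom σ M) :
    FixesFrom (L.foldl _root_.demazureStep σ) M := by
  induction L generalizing σ with
  | nil => exact h
  | cons b L ih =>
    exact ih (fun c hc => hL c (List.mem_cons_of_mem _ hc)) (h.demazureStep (hL b (by simp)))

/-- `(a, a + 1)` is the new inversion. -/
lemma invCountNat_lt_mul_sNat {a : ℕ} (h : FixesFrom σ a) :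
    invCountNat σ < invCountNat (σ * sNat a) := by
  have hsub : inversionSet σ ⊆ inversionSet (σ * sNat a) := by
    rintro ⟨p, q⟩ hpq
    have hbound := h.inversionSet_subset hpq
    simp only [Set.mem_prod, Set.mem_Iio] at hbound
    simpa [inversionSet, sNat_apply_of_lt hbound.1, sNat_apply_of_lt hbound.2] using hpq
  have hnew : (a, a + 1) ∈ inversionSet (σ * sNat a) \ inversionSet σ := by
    simp [inversionSet, sNat, h a le_rfl, h (a + 1) (by omega)]
  rw [invCountNat_eq_ncard, invCountNat_eq_ncard]
  exact Set.ncard_lt_ncard ((Set.ssubset_iff_of_subset hsub).2 ⟨_, hnew.1, hnew.2⟩)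
    ((h.mono (by omega)).mul_sNat le_rfl).inversionSet_finite

end FixesFrom

lemma invCountNat_mul_sNat_le {σ : Equiv.Perm ℕ} {b : ℕ} (hfin : (inversionSet σ).Finite)
    (hd : σ (b + 1) < σ b) : invCountNat (σ * sNat b) ≤ invCountNat σ := by
  rw [invCountNat_eq_ncard, invCountNat_eq_ncard]
  refine Set.ncard_le_ncard_of_injOn (fun x => (sNat b x.1, sNat b x.2)) ?_ ?_ hfin
  · rintro ⟨p, q⟩ ⟨hpq, hinv⟩
    have hne : ¬(p = b ∧ q = b + 1) := by
      rintro ⟨rfl, rfl⟩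
      simp [sNat] at hinv
      omega
    exact ⟨sNat_lt_sNat hpq hne, hinv⟩
  · rintro ⟨p, q⟩ - ⟨p', q'⟩ - he
    simp only [Prod.mk.injEq, (sNat b).injective.eq_iff] at he
    rw [he.1, he.2]

lemma inv_mul_sNat_apply (σ : Equiv.Perm ℕ) (b x : ℕ) :
    (σ * sNat b)⁻¹ x = sNat b (σ⁻¹ x) := by
  rw [mul_inv_rev, sNat, Equiv.swap_inv, Equiv.Perm.mul_apply]

namespace IsLeftDescent

variable {σ : Equiv.Perm ℕ} {a : ℕ}

lemma demazureStep (hfin : (inversionSet σ).Finite) (h : IsLeftDescent σ a) (b : ℕ) :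
    IsLeftDescent (demazureStep σ b) a := by
  unfold _root_.demazureStep
  split_ifs with hlen
  · exact h
  refine (inv_mul_sNat_apply σ b _).trans_lt ((sNat_lt_sNat h ?_).trans_eq
    (inv_mul_sNat_apply σ b _).symm)
  rintro ⟨hb, hb1⟩
  refine hlen (invCountNat_mul_sNat_le hfin ?_)
  rw [← Equiv.Perm.inv_eq_iff_eq.1 hb, ← Equiv.Perm.inv_eq_iff_eq.1 hb1]
  omega

lemma foldl_demazureStep {M : ℕ} {L : List ℕ} (hL : ∀ b ∈ L, b + 2 ≤ M)
    (hσ : FixesFrom σ M) (h : IsLeftDescent σ a) :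
    IsLeftDescent (L.foldl _root_.demazureStep σ) a := by
  induction L generalizing σ with
  | nil => exact h
  | cons b L ih =>
    exact ih (fun c hc => hL c (List.mem_cons_of_mem _ hc)) (hσ.demazureStep (hL b (by simp)))
      (h.demazureStep hσ.inversionSet_finite b)

end IsLeftDescent

lemma isLeftDescent_demazureProd_append_cons {L₁ L₂ : List ℕ} {a : ℕ}
    (h : ∀ b ∈ L₁, b + 2 ≤ a) : IsLeftDescent (demazureProd (L₁ ++ a :: L₂)) a := by
  set σ := L₁.foldl demazureStep 1
  have hσ : FixesFrom σ a := FixesFrom.foldl_demazureStep h fun _ _ => rfl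
  have hstep : demazureStep σ a = σ * sNat a := if_neg (not_le.2 hσ.invCountNat_lt_mul_sNat)
  have hdesc : IsLeftDescent (σ * sNat a) a := by
    rw [IsLeftDescent, inv_mul_sNat_apply, inv_mul_sNat_apply, hσ.inv a le_rfl,
      hσ.inv (a + 1) (by omega), sNat, Equiv.swap_apply_left, Equiv.swap_apply_right]
    omega
  have hfix : FixesFrom (σ * sNat a) (a + L₂.sum + 2) :=
    (hσ.mono (by omega)).mul_sNat (by omega)
  rw [demazureProd_eq_foldl, List.foldl_append, List.foldl_cons, hstep]
  exact hdesc.foldl_demazureStep (fun b hb => by have := List.le_sum_of_mem hb; omega) hfix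

lemma List.exists_range_eq_append_cons {N t : ℕ} (ht : t < N) :
    ∃ T, List.range N = List.range t ++ t :: T ∧ ∀ j ∈ T, t < j := by
  obtain ⟨m, rfl⟩ : ∃ m, N = t + (m + 1) := ⟨N - t - 1, by omega⟩
  refine ⟨(List.range m).map (t + 1 + ·), ?_, ?_⟩
  · rw [List.range_add, List.range_succ_eq_map]
    simp [Function.comp_def, Nat.add_assoc, Nat.add_comm 1]
  · simp only [List.mem_map, List.mem_range]
    omega

def ReadsBefore (x y : ℕ × ℕ) : Prop := x.1 < y.1 ∨ x.1 = y.1 ∧ y.2 < x.2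

def crossLetter (P : Finset (ℕ × ℕ)) (i j : ℕ) : Option ℕ :=
  if (i, j) ∈ P then some (i + j) else none

lemma mem_filterMap_crossLetter {P : Finset (ℕ × ℕ)} {i b : ℕ} {l : List ℕ} :
    b ∈ l.filterMap (crossLetter P i) ↔ ∃ j ∈ l, (i, j) ∈ P ∧ i + j = b := by
  simp [crossLetter, List.mem_filterMap]

lemma pdWord_eq_append_cons {P : Finset (ℕ × ℕ)} {r c : ℕ} (h : (r, c) ∈ P) :
    ∃ L₁ L₂, pdWord P = L₁ ++ (r + c) :: L₂ ∧
      ∀ b ∈ L₁, ∃ x ∈ P, ReadsBefore x (r, c) ∧ b = x.1 + x.2 := by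
  set N := (P.sup fun x => max x.1 x.2) + 1
  have hbound : max r c < N := Nat.lt_succ_of_le (Finset.le_sup (f := fun x => max x.1 x.2) h)
  set row : ℕ → List ℕ := fun i => (List.range N).reverse.filterMap (crossLetter P i)
  obtain ⟨R, hR, -⟩ :=
    List.exists_range_eq_append_cons (lt_of_le_of_lt (le_max_left r c) hbound)
  obtain ⟨C, hC, hCc⟩ :=
    List.exists_range_eq_append_cons (lt_of_le_of_lt (le_max_right r c) hbound)
  have hrow : row r = C.reverse.filterMap (crossLetter P r) ++
      (r + c) :: (List.range c).reverse.filterMap (crossLetter P r) := by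
    simp [row, hC, List.filterMap_append, crossLetter, h]
  refine ⟨(List.range r).flatMap row ++ C.reverse.filterMap (crossLetter P r),
    (List.range c).reverse.filterMap (crossLetter P r) ++ R.flatMap row, ?_, ?_⟩
  · change (List.range N).flatMap row = _
    rw [hR, List.flatMap_append, List.flatMap_cons, hrow]
    simp
  · intro b hb
    rcases List.mem_append.1 hb with hb | hb
    · obtain ⟨i, hi, hb⟩ := List.mem_flatMap.1 hb
      obtain ⟨j, -, hij, rfl⟩ := mem_filterMap_crossLetter.1 hb
      exact ⟨(i, j), hij, Or.inl (List.mem_range.1 hi), rfl⟩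
    · obtain ⟨j, hj, hrj, rfl⟩ := mem_filterMap_crossLetter.1 hb
      exact ⟨(r, j), hrj, Or.inr ⟨rfl, hCc j (List.mem_reverse.1 hj)⟩, rfl⟩

lemma exists_first_cross_in_columns_ge (P : Finset (ℕ × ℕ)) (k : ℕ)
    (hP : ∃ x ∈ P, k ≤ x.2) :
    ∃ r c, (r, c) ∈ P ∧ k ≤ c ∧ ∀ x ∈ P, k ≤ x.2 → ¬ ReadsBefore x (r, c) := by
  obtain ⟨⟨r, c⟩, hrc, hmin⟩ := (P.filter (k ≤ ·.2)).exists_min_image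
    (fun x => toLex (x.1, OrderDual.toDual x.2))
    (by obtain ⟨x, hx, hkx⟩ := hP; exact ⟨x, Finset.mem_filter.2 ⟨hx, hkx⟩⟩)
  rw [Finset.mem_filter] at hrc
  refine ⟨r, c, hrc.1, hrc.2, fun x hx hkx hbefore => ?_⟩
  have := hmin x (Finset.mem_filter.2 ⟨hx, hkx⟩)
  rw [← not_lt, Prod.Lex.toLex_lt_toLex] at this
  exact this hbefore

lemma IsStandardization.apply_eq_of_le {n k m : ℕ} {v : Fin n → Fin k}
    {u : Equiv.Perm (Fin (n + (k - m)))} (hu : IsStandardization v u) {p : Fin (n + (k - m))}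
    (hp : k ≤ (u p : ℕ)) :
    (u p : ℕ) = k + Set.ncard {q : Fin n | (q : ℕ) < (p : ℕ) ∧ ¬ InitialPos v q} := by
  obtain ⟨hlt, hge⟩ := hu p
  rcases lt_or_ge (p : ℕ) n with hpn | hpn
  · refine (hlt hpn).2 fun hinit => ?_
    have := (hlt hpn).1 hinit
    have := (v ⟨p, hpn⟩).isLt
    omega
  · have := (hge hpn).1
    omega

lemma IsStandardization.monotoneOn {n k m : ℕ} {v : Fin n → Fin k}
    {u : Equiv.Perm (Fin (n + (k - m)))} (hu : IsStandardization v u) :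
    MonotoneOn (fun p => (u p : ℕ)) {p | k ≤ (u p : ℕ)} := by
  intro p hp q hq hpq
  simp only [Set.mem_ofPred_eq] at hp hq ⊢
  rw [hu.apply_eq_of_le hp, hu.apply_eq_of_le hq, add_le_add_iff_left]
  exact Set.ncard_le_ncard (fun x hx => ⟨lt_of_lt_of_le hx.1 hpq, hx.2⟩) (Set.toFinite _)

lemma monotoneOn_preimage_Ici_of_extend {N k : ℕ} {u : Fin N → Fin N} {f : ℕ → ℕ}
    (hu : MonotoneOn (fun p => (u p : ℕ)) {p | k ≤ (u p : ℕ)})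
    (hf : ∀ a, f a = if h : a < N then (u ⟨a, h⟩ : ℕ) else a) :
    MonotoneOn f (f ⁻¹' Set.Ici k) := by
  intro x hx y hy hxy
  simp only [Set.mem_preimage, Set.mem_Ici, hf] at hx hy ⊢
  by_cases hyN : y < N
  · have hxN : x < N := lt_of_le_of_lt hxy hyN
    rw [dif_pos hxN] at hx ⊢
    rw [dif_pos hyN] at hy ⊢
    exact hu hx hy (Fin.mk_le_mk.2 hxy)
  · rw [dif_neg hyN]
    split_ifs
    · exact (u _).isLt.le.trans (not_lt.1 hyN)
    · exact hxy

lemma IsLeftDescent.not_monotoneOn {σ : Equiv.Perm ℕ} {a k : ℕ} (h : IsLeftDescent σ a)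
    (ha : k ≤ a) : ¬ MonotoneOn σ (σ ⁻¹' Set.Ici k) := by
  intro hmono
  have hmem : ∀ b, k ≤ b → σ⁻¹ b ∈ σ ⁻¹' Set.Ici k := fun b hb => by simpa using hb
  have := hmono (hmem _ (by omega)) (hmem _ ha) h.le
  simp at this

theorem pipeDream_crosses_in_first_k_columns_general (n k : ℕ)
    (w : Fin n → Fin k) (v : Fin n → Fin k)
    (u : Equiv.Perm (Fin (n + (k - Set.ncard (Set.range w)))))
    (hu : IsStandardization v u)
    (uext : Equiv.Perm ℕ)
    (huext : ∀ a : ℕ,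
      uext a = if h : a < n + (k - Set.ncard (Set.range w)) then (u ⟨a, h⟩ : ℕ) else a)
    (P : Finset (ℕ × ℕ)) (hP : demazureProd (pdWord P) = uext) :
    ∀ x ∈ P, x.2 < k := by
  intro x hxP
  by_contra! hcol
  obtain ⟨r, c, hrc, hkc, hfirst⟩ := exists_first_cross_in_columns_ge P k ⟨x, hxP, hcol⟩
  obtain ⟨L₁, L₂, hword, hL₁⟩ := pdWord_eq_append_cons hrc
  have hprefix : ∀ b ∈ L₁, b + 2 ≤ r + c := by
    intro b hb
    obtain ⟨⟨i, j⟩, hij, hbefore, rfl⟩ := hL₁ b hb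
    have hj : j < k := by
      by_contra! hj
      exact hfirst _ hij hj hbefore
    rcases hbefore with hi | ⟨hi, hcj⟩ <;> dsimp only at * <;> omega
  have hdesc : IsLeftDescent uext (r + c) := by
    rw [← hP, hword]
    exact isLeftDescent_demazureProd_append_cons hprefix
  exact hdesc.not_monotoneOn (hkc.trans (Nat.le_add_left c r))
    (monotoneOn_preimage_Ici_of_extend hu.monotoneOn huext)

/-- Let `w ∈ [k]ⁿ` be a word and `u = std(conv(w))` its standardized
convexification.  Then in every pipe dream for `u` — a finite set `P` of cross
positions whose associated permutation (the Demazure product of its word) is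
`u` (extended by the identity to a permutation of `ℕ`) — all crosses lie in
the leftmost `k` columns: `(i, j) ∈ P` implies `j < k` (0-indexed). -/
theorem pipeDream_crosses_in_first_k_columns (n k : ℕ) (h1 : 1 ≤ k) (h2 : k ≤ n)
    (w : Fin n → Fin k) (v : Fin n → Fin k) (hv : IsConvexification w v)
    (u : Equiv.Perm (Fin (n + (k - Set.ncard (Set.range w)))))
    (hu : IsStandardization v u)
    (uext : Equiv.Perm ℕ)
    (huext : ∀ a : ℕ,
      uext a = if h : a < n + (k - Set.ncard (Set.range w)) then (u ⟨a, h⟩ : ℕ) else a)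
    (P : Finset (ℕ × ℕ)) (hP : demazureProd (pdWord P) = uext) :
    ∀ x ∈ P, x.2 < k :=
  pipeDream_crosses_in_first_k_columns_general n k w v u hu uext huext P hP
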